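/- The delta functional at the origin is not a positive linear functional for the Moyal star product on ℝ^{2n}: for H = p²/(2m) + k q² with k, m > 0, one has (H ⋆_M H)(0,0) = −kλ²/(2m) < 0, even though H is real and H(0,0) = 0, so evaluation at the origin fails positivity δ₀(H̄ ⋆ H) ≥ 0. -/

import Mathlib

open MvPolynomial

/-- Iterated partial derivative along a list of coordinate directions. -/
noncomputable def iterD {m : ℕ} (r : List (Fin m)) (u : MvPolynomial (Fin m) ℂ) :
    MvPolynomial (Fin m) ℂ :=
  r.foldr (fun i w => pderiv i w) u

/-- The `k`-th Moyal bidifferential operator at `ν = iλ`. -/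
noncomputable def CkC {m : ℕ} (P : Fin m → Fin m → ℝ) (k : ℕ)
    (u v : MvPolynomial (Fin m) ℂ) : MvPolynomial (Fin m) ℂ :=
  ((Complex.I / 2) ^ k / (k.factorial : ℂ)) •
    ∑ r : Fin k → Fin m, ∑ s : Fin k → Fin m,
      ((∏ t, P (r t) (s t) : ℝ) : ℂ) • (iterD (List.ofFn r) u * iterD (List.ofFn s) v)

/-- The Moyal star product at `ν = iλ`, as formal power series in `λ`. -/
noncomputable def moyalC {m : ℕ} (P : Fin m → Fin m → ℝ)
    (u v : PowerSeries (MvPolynomial (Fin m) ℂ)) : PowerSeries (MvPolynomial (Fin m) ℂ) :=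
  PowerSeries.mk fun n => ∑ k ∈ Finset.range (n + 1), ∑ p ∈ Finset.HasAntidiagonal.antidiagonal (n - k),
    CkC P k (PowerSeries.coeff p.1 u) (PowerSeries.coeff p.2 v)

/-- Positivity for real `λ`-series: the lowest-order nonvanishing coefficient is positive. -/
def PosSeries (a : PowerSeries ℝ) : Prop :=
  ∃ n : ℕ, (∀ m < n, PowerSeries.coeff (R := ℝ) m a = 0) ∧ 0 < PowerSeries.coeff (R := ℝ) n a

/-- The canonical Poisson tensor on `ℝ²` (coordinates `(q,p)`). -/
def Pcan : Fin 2 → Fin 2 → ℝ := ![![0, 1], ![-1, 0]]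

/-!
For a quadratic `H` only the cochain `C₂` survives at the origin: `C_k(H, H) = 0` for `k ≥ 3`
since each factor is differentiated `k` times, for odd `k` since the two arguments are equal and
the Poisson tensor is antisymmetric, and `C₀(H, H) = H²` vanishes at `0`. For `H = a p² + b q²`,
`C₂(H, H) = -(1/8)(H_qq H_pp + H_pp H_qq) = -ab` is constant, so `δ₀(H ⋆ H) = -ab λ²`.
-/

namespace MvPolynomial

variable {σ R : Type*} [CommSemiring R]

theorem totalDegree_pderiv_lt {i : σ} {p : MvPolynomial σ R} (hp : pderiv i p ≠ 0) :
    (pderiv i p).totalDegree < p.totalDegree := by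
  obtain ⟨m, hm, hdeg⟩ := Finset.exists_mem_eq_sup _ (support_nonempty.mpr hp)
    fun s => s.sum fun _ e => e
  have hcoeff : m + Finsupp.single i 1 ∈ p.support := by
    rw [mem_support_iff] at hm ⊢
    exact left_ne_zero_of_mul (coeff_pderiv (i := i) p m ▸ hm)
  calc (pderiv i p).totalDegree = m.sum fun _ e => e := hdeg
    _ < (m + Finsupp.single i 1).sum fun _ e => e := by
      rw [Finsupp.sum_add_index' (fun _ => rfl) (fun _ _ _ => rfl), Finsupp.sum_single_index rfl]
      omega
    _ ≤ p.totalDegree := le_totalDegree hcoeff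

@[simp]
theorem pderiv_ofNat (i : σ) (n : ℕ) [n.AtLeastTwo] : pderiv i (ofNat(n) : MvPolynomial σ R) = 0 :=
  (pderiv i).map_natCast n

end MvPolynomial

theorem Fintype.sum_fin_two_arrow {α M : Type*} [Fintype α] [AddCommMonoid M]
    (f : (Fin 2 → α) → M) : ∑ r, f r = ∑ a, ∑ b, f ![a, b] := by
  rw [← (finTwoArrowEquiv α).symm.sum_comp, Fintype.sum_prod_type]
  rfl

theorem iterD_cons {m : ℕ} (i : Fin m) (l : List (Fin m)) (u : MvPolynomial (Fin m) ℂ) :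
    iterD (i :: l) u = pderiv i (iterD l u) := rfl

theorem iterD_zero {m : ℕ} (l : List (Fin m)) : iterD l (0 : MvPolynomial (Fin m) ℂ) = 0 := by
  induction l with
  | nil => rfl
  | cons i l ih => rw [iterD_cons, ih, map_zero]

theorem totalDegree_iterD_add_length_le {m : ℕ} {l : List (Fin m)} {u : MvPolynomial (Fin m) ℂ}
    (h : iterD l u ≠ 0) : (iterD l u).totalDegree + l.length ≤ u.totalDegree := by
  induction l with
  | nil => rfl
  | cons i l ih =>
    rw [iterD_cons] at h ⊢
    have hl : iterD l u ≠ 0 := fun h0 => h (by rw [h0, map_zero])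
    have := totalDegree_pderiv_lt h
    have := ih hl
    simp only [List.length_cons]
    omega

theorem iterD_eq_zero_of_totalDegree_lt {m : ℕ} {l : List (Fin m)} {u : MvPolynomial (Fin m) ℂ}
    (h : u.totalDegree < l.length) : iterD l u = 0 := by
  by_contra hne
  have := totalDegree_iterD_add_length_le hne
  omega

theorem CkC_eq_zero_of_totalDegree_lt {m : ℕ} (P : Fin m → Fin m → ℝ) {k : ℕ}
    {u : MvPolynomial (Fin m) ℂ} (h : u.totalDegree < k) (v : MvPolynomial (Fin m) ℂ) :
    CkC P k u v = 0 := by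
  simp [CkC, iterD_eq_zero_of_totalDegree_lt (l := List.ofFn _) (u := u) (by simpa using h)]

theorem CkC_zero_left {m : ℕ} (P : Fin m → Fin m → ℝ) (k : ℕ) (v : MvPolynomial (Fin m) ℂ) :
    CkC P k 0 v = 0 := by
  simp [CkC, iterD_zero]

theorem CkC_zero_right {m : ℕ} (P : Fin m → Fin m → ℝ) (k : ℕ) (u : MvPolynomial (Fin m) ℂ) :
    CkC P k u 0 = 0 := by
  simp [CkC, iterD_zero]

theorem CkC_zero {m : ℕ} (P : Fin m → Fin m → ℝ) (u v : MvPolynomial (Fin m) ℂ) :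
    CkC P 0 u v = u * v := by
  simp [CkC, iterD]

theorem CkC_self_eq_zero_of_odd {m : ℕ} {P : Fin m → Fin m → ℝ} (hP : ∀ i j, P j i = -P i j)
    {k : ℕ} (hk : Odd k) (u : MvPolynomial (Fin m) ℂ) : CkC P k u u = 0 := by
  let f : (Fin k → Fin m) → (Fin k → Fin m) → MvPolynomial (Fin m) ℂ := fun r s =>
    ((∏ t, P (r t) (s t) : ℝ) : ℂ) • (iterD (List.ofFn r) u * iterD (List.ofFn s) u)
  have hswap : ∀ r s, f s r = -f r s := by
    intro r s
    have hprod : ∏ t, P (s t) (r t) = -∏ t, P (r t) (s t) := by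
      rw [Finset.prod_congr rfl fun t _ => hP (r t) (s t), Finset.prod_neg, Finset.card_univ,
        Fintype.card_fin, hk.neg_one_pow, neg_one_mul]
    dsimp only [f]
    rw [hprod, mul_comm, Complex.ofReal_neg, neg_smul]
  have hsum : ∑ r, ∑ s, f r s = 0 := by
    rw [← CharZero.eq_neg_self_iff]
    conv_lhs => rw [Finset.sum_comm]
    simp only [← Finset.sum_neg_distrib]
    exact Finset.sum_congr rfl fun r _ => Finset.sum_congr rfl fun s _ => hswap r s
  change _ • ∑ r, ∑ s, f r s = 0
  rw [hsum, smul_zero]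

theorem coeff_moyalC_C_C {m : ℕ} (P : Fin m → Fin m → ℝ) (u v : MvPolynomial (Fin m) ℂ) (n : ℕ) :
    PowerSeries.coeff n (moyalC P (PowerSeries.C u) (PowerSeries.C v)) = CkC P n u v := by
  rw [moyalC, PowerSeries.coeff_mk, Finset.sum_eq_single n]
  · simp
  · intro k hk hkn
    refine Finset.sum_eq_zero fun p hp => ?_
    rw [Finset.mem_range] at hk
    rw [Finset.HasAntidiagonal.mem_antidiagonal] at hp
    rcases Nat.eq_zero_or_pos p.1 with h1 | h1
    · have h2 : p.2 ≠ 0 := by omega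
      simp [PowerSeries.coeff_C, h2, CkC_zero_right]
    · simp [PowerSeries.coeff_C, h1.ne', CkC_zero_left]
  · simp

theorem CkC_Pcan_two (u v : MvPolynomial (Fin 2) ℂ) :
    CkC Pcan 2 u v = -(1 / 8 : ℂ) •
      (iterD [0, 0] u * iterD [1, 1] v + iterD [1, 1] u * iterD [0, 0] v
        - iterD [0, 1] u * iterD [1, 0] v - iterD [1, 0] u * iterD [0, 1] v) := by
  simp only [CkC, Fintype.sum_fin_two_arrow, Fin.sum_univ_two, Fin.prod_univ_two, List.ofFn_succ,
    List.ofFn_zero, Matrix.cons_val_zero, Matrix.cons_val_one, Pcan]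
  norm_num [div_pow, Complex.I_sq]
  module

theorem Pcan_antisymm (i j : Fin 2) : Pcan j i = -Pcan i j := by
  fin_cases i <;> fin_cases j <;> simp [Pcan]

/-- The Hamiltonian `a p² + b q²` in the coordinates `(q, p)`. -/
noncomputable def quadraticHamiltonian (a b : ℂ) : MvPolynomial (Fin 2) ℂ :=
  C a * X 1 ^ 2 + C b * X 0 ^ 2

section quadraticHamiltonian

variable (a b : ℂ)

theorem totalDegree_quadraticHamiltonian_le : (quadraticHamiltonian a b).totalDegree ≤ 2 := by
  refine (totalDegree_add _ _).trans (max_le ?_ ?_) <;>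
    exact (totalDegree_mul _ _).trans (by simp [totalDegree_X_pow])

theorem CkC_Pcan_two_quadraticHamiltonian :
    CkC Pcan 2 (quadraticHamiltonian a b) (quadraticHamiltonian a b) = C (-(a * b)) := by
  have hqq : iterD [0, 0] (quadraticHamiltonian a b) = C b * 2 := by
    simp [quadraticHamiltonian, iterD]
  have hpp : iterD [1, 1] (quadraticHamiltonian a b) = C a * 2 := by
    simp [quadraticHamiltonian, iterD]
  have hqp : iterD [0, 1] (quadraticHamiltonian a b) = 0 := by
    simp [quadraticHamiltonian, iterD]
  have hpq : iterD [1, 0] (quadraticHamiltonian a b) = 0 := by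
    simp [quadraticHamiltonian, iterD]
  rw [CkC_Pcan_two, hqq, hpp, hqp, hpq, smul_eq_C_mul]
  simp only [mul_zero, sub_zero, ← map_ofNat C 2, ← C_mul, ← C_add]
  congr 1
  ring

theorem map_eval_zero_moyalC_quadraticHamiltonian :
    PowerSeries.map (eval fun _ => 0)
        (moyalC Pcan (PowerSeries.C (quadraticHamiltonian a b))
          (PowerSeries.C (quadraticHamiltonian a b)))
      = PowerSeries.C (-(a * b)) * PowerSeries.X ^ 2 := by
  ext n
  rw [PowerSeries.coeff_map, coeff_moyalC_C_C, PowerSeries.coeff_C_mul, PowerSeries.coeff_X_pow]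
  match n with
  | 0 => simp [CkC_zero, quadraticHamiltonian]
  | 1 => simp [CkC_self_eq_zero_of_odd Pcan_antisymm odd_one]
  | 2 => simp [CkC_Pcan_two_quadraticHamiltonian]
  | n + 3 =>
    rw [CkC_eq_zero_of_totalDegree_lt Pcan
      ((totalDegree_quadraticHamiltonian_le a b).trans_lt (by omega))]
    simp

end quadraticHamiltonian

theorem posSeries_C_mul_X_pow_iff {c : ℝ} {n : ℕ} :
    PosSeries (PowerSeries.C c * PowerSeries.X ^ n) ↔ 0 < c := by
  simp only [PosSeries, PowerSeries.coeff_C_mul, PowerSeries.coeff_X_pow]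
  constructor
  · rintro ⟨k, -, hk⟩
    split_ifs at hk
    · simpa using hk
    · simp at hk
  · intro hc
    exact ⟨n, fun k hk => by simp [hk.ne], by simpa using hc⟩

/-- The delta functional at the origin is not positive for the Moyal star product:
for `H = p²/(2m) + k q²` with `k, m > 0`, `H` is real with `H(0,0) = 0`, yet
`(H ⋆_M H)(0,0) = −k λ²/(2m)`, which is a negative `λ`-series; so evaluation at the
origin fails the positivity requirement `δ₀(H̄ ⋆ H) ≥ 0`. -/
theorem delta_not_positive_moyal (mm kk : ℝ) (hm : 0 < mm) (hk : 0 < kk) :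
    let H : MvPolynomial (Fin 2) ℂ :=
      MvPolynomial.C (((1 : ℝ) / (2 * mm) : ℝ) : ℂ) * (X 1) ^ 2
        + MvPolynomial.C ((kk : ℝ) : ℂ) * (X 0) ^ 2
    MvPolynomial.map (starRingEnd ℂ) H = H ∧
    MvPolynomial.eval (fun _ => (0 : ℂ)) H = 0 ∧
    PowerSeries.map (MvPolynomial.eval (fun _ => (0 : ℂ)))
        (moyalC Pcan (PowerSeries.C H) (PowerSeries.C H))
      = PowerSeries.C (R := ℂ) ((-(kk / (2 * mm)) : ℝ) : ℂ) * PowerSeries.X ^ 2 ∧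
    ¬ PosSeries (PowerSeries.C (R := ℝ) (-(kk / (2 * mm))) * PowerSeries.X ^ 2) ∧
    PosSeries (PowerSeries.C (R := ℝ) (kk / (2 * mm)) * PowerSeries.X ^ 2) := by
  intro H
  have hc : 0 < kk / (2 * mm) := by positivity
  refine ⟨by simp [H, map_ofNat], by simp [H], ?_, ?_, posSeries_C_mul_X_pow_iff.mpr hc⟩
  · rw [show H = quadraticHamiltonian _ _ from rfl, map_eval_zero_moyalC_quadraticHamiltonian]
    congr 2
    push_cast
    ring
  · rw [posSeries_C_mul_X_pow_iff]
    linarith
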